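/- Let F(x) := ∫₀ˣ (1−t⁶)^{−1/2} dt and H(x) := ∫₀ˣ (1−t²)^{−5/6} dt. For every W ∈ [0,1], H( √(1−W⁶) ) = 3 · ( F(1) − F(W) ). (This is the identity sin_{6/5,2}(2x) = √(1 − sin_{2,6}⁶(π_{2,6}/2 − 2x/3)).) -/

import Mathlib

/-! The function `w ↦ H(√(1 - w⁶)) + 3 F(w)` has derivative zero on `(0, 1)`: with `s = √(1 - w⁶)`
one has `1 - s² = w⁶`, so the chain rule gives `H'(s) · ds/dw = (w⁶)^{-5/6} · (-3 w⁵ / s) = -3 / s`,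
while `3 F'(w) = 3 (1 - w⁶)^{-1/2} = 3 / s`. It is continuous on `[0, 1]`, so by the mean value
theorem it is constant there, equal to its value `H(0) + 3 F(1) = 3 F(1)` at `w = 1`. -/

/-- `F = F_{2,6}`, the incomplete integral `∫₀ˣ (1−t⁶)^{−1/2} dt`. -/
noncomputable def F26 (x : ℝ) : ℝ := ∫ t in (0:ℝ)..x, (1 - t ^ 6) ^ (-(1/2) : ℝ)

/-- `H = F_{6/5,2}`, the incomplete integral `∫₀ˣ (1−t²)^{−5/6} dt`. -/
noncomputable def H652 (x : ℝ) : ℝ := ∫ t in (0:ℝ)..x, (1 - t ^ 2) ^ (-(5/6) : ℝ)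

open Real MeasureTheory Set intervalIntegral

section OneSubPowRpow

variable {n : ℕ} {r : ℝ}

theorem intervalIntegrable_one_sub_pow_rpow (hn : n ≠ 0) (hr : -1 < r) (hr0 : r ≤ 0) :
    IntervalIntegrable (fun t : ℝ => (1 - t ^ n) ^ r) volume 0 1 := by
  have hdom : IntervalIntegrable (fun t : ℝ => (1 - t) ^ r) volume 0 1 := by
    simpa using ((intervalIntegrable_rpow' (a := 0) (b := 1) hr).comp_sub_left 1).symm
  refine hdom.mono_fun (Measurable.aestronglyMeasurable (by fun_prop)) ?_
  refine (ae_restrict_iff' measurableSet_uIoc).2 (.of_forall fun t ht => ?_)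
  rw [uIoc_of_le zero_le_one] at ht
  obtain ⟨ht0, ht1⟩ := ht
  have htn : t ^ n ≤ t := pow_le_of_le_one ht0.le ht1 hn
  dsimp only
  rw [Real.norm_of_nonneg (rpow_nonneg (by linarith) r),
    Real.norm_of_nonneg (rpow_nonneg (by linarith) r)]
  rcases ht1.eq_or_lt with rfl | ht1
  · simp
  · exact rpow_le_rpow_of_nonpos (by linarith) (by linarith) hr0

theorem continuousOn_integral_one_sub_pow_rpow (hn : n ≠ 0) (hr : -1 < r) (hr0 : r ≤ 0) :
    ContinuousOn (fun x => ∫ t in (0 : ℝ)..x, (1 - t ^ n) ^ r) (Icc 0 1) := by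
  simpa [uIcc_of_le zero_le_one] using
    intervalIntegral.continuousOn_primitive_interval'
      (intervalIntegrable_one_sub_pow_rpow hn hr hr0) left_mem_uIcc

theorem hasDerivAt_integral_one_sub_pow_rpow (hn : n ≠ 0) (hr : -1 < r) (hr0 : r ≤ 0)
    {x : ℝ} (hx : x ∈ Ico 0 1) :
    HasDerivAt (fun u => ∫ t in (0 : ℝ)..u, (1 - t ^ n) ^ r) ((1 - x ^ n) ^ r) x := by
  have hxn : 1 - x ^ n ≠ 0 := (sub_pos.2 (pow_lt_one₀ hx.1 hx.2 hn)).ne'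
  refine intervalIntegral.integral_hasDerivAt_right ?_
    (StronglyMeasurable.stronglyMeasurableAtFilter (Measurable.stronglyMeasurable (by fun_prop)))
    ((continuous_const.sub (continuous_pow n)).continuousAt.rpow_const (Or.inl hxn))
  refine (intervalIntegrable_one_sub_pow_rpow hn hr hr0).mono_set ?_
  rw [uIcc_of_le hx.1, uIcc_of_le zero_le_one]
  exact Icc_subset_Icc le_rfl hx.2.le

end OneSubPowRpow

theorem continuousOn_F26 : ContinuousOn F26 (Icc 0 1) :=
  continuousOn_integral_one_sub_pow_rpow (by norm_num) (by norm_num) (by norm_num)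

theorem continuousOn_H652 : ContinuousOn H652 (Icc 0 1) :=
  continuousOn_integral_one_sub_pow_rpow (by norm_num) (by norm_num) (by norm_num)

theorem hasDerivAt_F26 {x : ℝ} (hx : x ∈ Ico 0 1) : HasDerivAt F26 ((1 - x ^ 6) ^ (-(1/2) : ℝ)) x :=
  hasDerivAt_integral_one_sub_pow_rpow (by norm_num) (by norm_num) (by norm_num) hx

theorem hasDerivAt_H652 {x : ℝ} (hx : x ∈ Ico 0 1) :
    HasDerivAt H652 ((1 - x ^ 2) ^ (-(5/6) : ℝ)) x :=
  hasDerivAt_integral_one_sub_pow_rpow (by norm_num) (by norm_num) (by norm_num) hx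

theorem sqrt_one_sub_pow_six_mem_Icc {w : ℝ} (hw : w ∈ Icc 0 1) : √(1 - w ^ 6) ∈ Icc 0 1 :=
  ⟨sqrt_nonneg _, sqrt_le_one.2 (by linarith [pow_nonneg hw.1 6])⟩

theorem hasDerivAt_H652_sqrt_one_sub_pow_six {w : ℝ} (hw : w ∈ Ioo 0 1) :
    HasDerivAt (fun w => H652 √(1 - w ^ 6)) (-3 * (1 - w ^ 6) ^ (-(1/2) : ℝ)) w := by
  obtain ⟨hw0, hw1⟩ := hw
  have hpos : 0 < 1 - w ^ 6 := sub_pos.2 (pow_lt_one₀ hw0.le hw1 (by norm_num))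
  set s := √(1 - w ^ 6) with hs
  have hs0 : 0 < s := sqrt_pos.2 hpos
  have hcompl : 1 - s ^ 2 = w ^ 6 := by rw [sq_sqrt hpos.le]; ring
  have hs1 : s < 1 := by nlinarith [pow_pos hw0 6]
  have hinner : HasDerivAt (fun w : ℝ => 1 - w ^ 6) (-(6 * w ^ 5)) w := by
    simpa using (hasDerivAt_pow 6 w).const_sub 1
  have hcomp := (hasDerivAt_H652 ⟨hs0.le, hs1⟩).comp w ((hasDerivAt_sqrt hpos.ne').comp w hinner)
  refine hcomp.congr_deriv ?_
  have hH' : (w ^ 6) ^ (-(5/6) : ℝ) = (w ^ 5)⁻¹ := by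
    rw [← rpow_natCast w 6, ← rpow_mul hw0.le, ← rpow_natCast w 5, ← rpow_neg hw0.le]
    norm_num
  have hF' : (1 - w ^ 6) ^ (-(1/2) : ℝ) = s⁻¹ := by
    rw [rpow_neg hpos.le, hs, sqrt_eq_rpow]
  rw [hcompl, hH', hF']
  field_simp
  ring

theorem eq_of_hasDerivAt_eq_zero {f : ℝ → ℝ} {a b : ℝ} (hab : a ≤ b)
    (hf : ContinuousOn f (Icc a b)) (hf' : ∀ x ∈ Ioo a b, HasDerivAt f 0 x) : f a = f b := by
  rcases hab.eq_or_lt with rfl | hab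
  · rfl
  obtain ⟨_, _, hslope⟩ := exists_hasDerivAt_eq_slope f (fun _ => 0) hab hf hf'
  rw [eq_comm, div_eq_zero_iff, sub_eq_zero, sub_eq_zero] at hslope
  exact (hslope.resolve_right hab.ne').symm

/-- The identity `sin_{6/5,2}(2x) = √(1 − sin_{2,6}⁶(π_{2,6}/2 − 2x/3))`,
expressed via the integrals. -/
theorem f_via_complement (W : ℝ) (hW : W ∈ Set.Icc (0:ℝ) 1) :
    H652 (Real.sqrt (1 - W ^ 6)) = 3 * (F26 1 - F26 W) := by
  set g := fun w => H652 √(1 - w ^ 6) + 3 * F26 w with hg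
  have hg_cont : ContinuousOn g (Icc 0 1) :=
    (continuousOn_H652.comp (by fun_prop) fun _ => sqrt_one_sub_pow_six_mem_Icc).add
      (continuousOn_const.mul continuousOn_F26)
  have hg_deriv : ∀ w ∈ Ioo (0 : ℝ) 1, HasDerivAt g 0 w := fun w hw =>
    ((hasDerivAt_H652_sqrt_one_sub_pow_six hw).fun_add
      ((hasDerivAt_F26 (Ioo_subset_Ico_self hw)).const_mul 3)).congr_deriv (by ring)
  have hgW : g W = g 1 := eq_of_hasDerivAt_eq_zero hW.2
    (hg_cont.mono (Icc_subset_Icc_left (α := ℝ) hW.1))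
    fun x hx => hg_deriv x ⟨hW.1.trans_lt hx.1, hx.2⟩
  have hg1 : g 1 = 3 * F26 1 := by simp [hg, H652]
  simp only [hg] at hgW
  linarith
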